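/- Let M ∈ R^{d×d} be a symmetric matrix with eigenvalues λ₁, …, λ_d sorted so that |λ₁| ≥ ⋯ ≥ |λ_d|, with corresponding orthonormal eigenvectors u₁, …, u_d. Let μ ≥ 0 and let U = (u_{j+1}, …, u_d) ∈ R^{d×(d−j)} consist of all eigenvectors whose eigenvalues have absolute value ≤ μ. Let v ∈ R^{d} be a unit vector with ‖vᵀ U‖₂ ≤ ε ≤ 1/2, and define M' = (I − vvᵀ) M (I − vvᵀ). Let τ > 0 and let [V₂, V₁, v] ∈ R^{d×d} be an orthogonal matrix whose columns are eigenvectors of M', where the columns of V₁ are eigenvectors of M' whose eigenvalues have absolute value ≤ μ + τ and the columns of V₂ are eigenvectors of M' whose eigenvalues have absolute value > μ + τ. Then there exists a matrix Q with ‖Q‖₂ ≤ 1 such that ‖U − V₁ Q‖₂ ≤ √( 169 ε² ‖M‖₂² / τ² + ε² ). -/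

import Mathlib

open Matrix

/-- the Euclidean norm of a real vector -/
noncomputable def evnorm {ι : Type*} [Fintype ι] (v : ι → ℝ) : ℝ := Real.sqrt (∑ i, v i ^ 2)

/-- the Euclidean dot product of two real vectors -/
def vdot {ι : Type*} [Fintype ι] (u v : ι → ℝ) : ℝ := ∑ i, u i * v i

/-- the spectral norm (ℓ₂ operator norm) of a real matrix -/
noncomputable def specNorm {m n : ℕ} (A : Matrix (Fin m) (Fin n) ℝ) : ℝ :=
  ‖LinearMap.toContinuousLinearMap (Matrix.toEuclideanLin A)‖

/-!
Take `Q = V₁ᵀ U`. Completeness of `[V₂, V₁, v]` gives `U - V₁ Q = V₂ (V₂ᵀ U) + v (vᵀ U)`, two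
terms with orthogonal ranges, so `‖U - V₁ Q‖₂² ≤ ‖V₂ᵀ U‖₂² + ‖vᵀ U‖²` and the second term is at
most `ε²`. If `y ⊥ v` is an eigenvector of `M'` with eigenvalue `l` and `u` one of `M` with
eigenvalue `λ`, evaluating `yᵀ M' u` in two ways gives `(λ - l) yᵀu = (yᵀ M v)(vᵀ u)`. For columns
of `V₂` and `U` the eigenvalue gap is at least `τ`, so `V₂ᵀ U` is entrywise dominated by the
rank-one matrix `(V₂ᵀ M v)(vᵀ U) / τ`, and its Frobenius norm gives `‖V₂ᵀ U‖₂ ≤ ‖M‖₂ ε / τ`.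
-/

open scoped Matrix.Norms.L2Operator

section SpectralNorm

variable {m n : ℕ}

lemma evnorm_eq_norm (x : Fin n → ℝ) : evnorm x = ‖WithLp.toLp 2 x‖ := by
  simp [evnorm, EuclideanSpace.norm_eq]

lemma evnorm_nonneg (x : Fin n → ℝ) : 0 ≤ evnorm x := Real.sqrt_nonneg _

lemma evnorm_sq (x : Fin n → ℝ) : evnorm x ^ 2 = ∑ i, x i ^ 2 :=
  Real.sq_sqrt (by positivity)

lemma evnorm_sq_eq_dotProduct (x : Fin n → ℝ) : evnorm x ^ 2 = x ⬝ᵥ x := by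
  rw [evnorm_sq]
  simp only [dotProduct, sq]

lemma sq_dotProduct_le (x y : Fin n → ℝ) :
    (x ⬝ᵥ y) ^ 2 ≤ evnorm x ^ 2 * evnorm y ^ 2 := by
  rw [evnorm_sq, evnorm_sq]
  exact Finset.sum_mul_sq_le_sq_mul_sq Finset.univ x y

lemma specNorm_eq_l2_opNorm (A : Matrix (Fin m) (Fin n) ℝ) : specNorm A = ‖A‖ := rfl

lemma specNorm_nonneg (A : Matrix (Fin m) (Fin n) ℝ) : 0 ≤ specNorm A := norm_nonneg _

lemma evnorm_mulVec_le (A : Matrix (Fin m) (Fin n) ℝ) (x : Fin n → ℝ) :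
    evnorm (A *ᵥ x) ≤ specNorm A * evnorm x := by
  rw [evnorm_eq_norm, evnorm_eq_norm, specNorm_eq_l2_opNorm]
  exact A.l2_opNorm_mulVec (WithLp.toLp 2 x)

lemma specNorm_le_of_forall_evnorm_mulVec_le {A : Matrix (Fin m) (Fin n) ℝ} {C : ℝ}
    (hC : 0 ≤ C) (h : ∀ x, evnorm (A *ᵥ x) ≤ C * evnorm x) : specNorm A ≤ C :=
  ContinuousLinearMap.opNorm_le_bound _ hC fun x => by
    have hx := h x.ofLp
    rwa [evnorm_eq_norm, evnorm_eq_norm, WithLp.toLp_ofLp] at hx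

lemma specNorm_mul_le {k : ℕ} (A : Matrix (Fin m) (Fin n) ℝ) (B : Matrix (Fin n) (Fin k) ℝ) :
    specNorm (A * B) ≤ specNorm A * specNorm B :=
  l2_opNorm_mul A B

lemma specNorm_transpose (A : Matrix (Fin m) (Fin n) ℝ) : specNorm Aᵀ = specNorm A := by
  rw [specNorm_eq_l2_opNorm, ← conjTranspose_eq_transpose_of_trivial, l2_opNorm_conjTranspose]
  rfl

section Orthonormal

variable {A : Matrix (Fin m) (Fin n) ℝ} (hA : Aᵀ * A = 1)
include hA

lemma dotProduct_mulVec_self_of_transpose_mul_self (x : Fin n → ℝ) :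
    A *ᵥ x ⬝ᵥ A *ᵥ x = x ⬝ᵥ x := by
  rw [dotProduct_mulVec, ← mulVec_transpose, mulVec_mulVec, hA, one_mulVec]

lemma specNorm_le_one_of_transpose_mul_self : specNorm A ≤ 1 :=
  specNorm_le_of_forall_evnorm_mulVec_le zero_le_one fun x => by
    rw [one_mul, ← sq_le_sq₀ (evnorm_nonneg _) (evnorm_nonneg _), evnorm_sq_eq_dotProduct,
      evnorm_sq_eq_dotProduct, dotProduct_mulVec_self_of_transpose_mul_self hA]

lemma evnorm_transpose_mulVec_le (x : Fin m → ℝ) : evnorm (Aᵀ *ᵥ x) ≤ evnorm x := by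
  calc evnorm (Aᵀ *ᵥ x) ≤ specNorm Aᵀ * evnorm x := evnorm_mulVec_le _ _
    _ ≤ 1 * evnorm x := by
      rw [specNorm_transpose]
      exact mul_le_mul_of_nonneg_right (specNorm_le_one_of_transpose_mul_self hA) (evnorm_nonneg x)
    _ = evnorm x := one_mul _

end Orthonormal

lemma specNorm_le_sqrt_sum_sq (A : Matrix (Fin m) (Fin n) ℝ) :
    specNorm A ≤ √(∑ i, ∑ j, A i j ^ 2) := by
  refine specNorm_le_of_forall_evnorm_mulVec_le (Real.sqrt_nonneg _) fun x => ?_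
  rw [evnorm, evnorm, ← Real.sqrt_mul (by positivity), Finset.sum_mul]
  exact Real.sqrt_le_sqrt <| Finset.sum_le_sum fun i _ =>
    Finset.sum_mul_sq_le_sq_mul_sq Finset.univ (A i) x

lemma specNorm_le_of_abs_apply_le_mul {A : Matrix (Fin m) (Fin n) ℝ} {a : Fin m → ℝ}
    {b : Fin n → ℝ} {C : ℝ} (hC : 0 ≤ C) (h : ∀ i j, |A i j| ≤ C * (|a i| * |b j|)) :
    specNorm A ≤ C * (evnorm a * evnorm b) := by
  refine (specNorm_le_sqrt_sum_sq A).trans ?_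
  calc √(∑ i, ∑ j, A i j ^ 2) ≤ √(∑ i, ∑ j, (C * (|a i| * |b j|)) ^ 2) :=
        Real.sqrt_le_sqrt <| Finset.sum_le_sum fun i _ => Finset.sum_le_sum fun j _ =>
          sq_le_sq' (by linarith [neg_abs_le (A i j), h i j]) ((le_abs_self _).trans (h i j))
    _ = √((C * (evnorm a * evnorm b)) ^ 2) := by
        rw [mul_pow, mul_pow, evnorm_sq, evnorm_sq, Finset.sum_mul_sum, Finset.mul_sum]
        simp only [mul_pow, sq_abs, Finset.mul_sum]
    _ = C * (evnorm a * evnorm b) :=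
        Real.sqrt_sq (mul_nonneg hC (mul_nonneg (evnorm_nonneg _) (evnorm_nonneg _)))

lemma specNorm_mul_add_vecMulVec_le {k : ℕ} {A : Matrix (Fin m) (Fin n) ℝ} {v : Fin m → ℝ}
    (hA : Aᵀ * A = 1) (hAv : v ᵥ* A = 0) (hv : evnorm v = 1)
    (X : Matrix (Fin n) (Fin k) ℝ) (w : Fin k → ℝ) :
    specNorm (A * X + vecMulVec v w) ≤ √(specNorm X ^ 2 + evnorm w ^ 2) := by
  refine specNorm_le_of_forall_evnorm_mulVec_le (Real.sqrt_nonneg _) fun x => ?_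
  have hvv : v ⬝ᵥ v = 1 := by rw [← evnorm_sq_eq_dotProduct, hv, one_pow]
  have hperp : v ⬝ᵥ A *ᵥ (X *ᵥ x) = 0 := by rw [dotProduct_mulVec, hAv, zero_dotProduct]
  have hexpand : evnorm ((A * X + vecMulVec v w) *ᵥ x) ^ 2 =
      evnorm (X *ᵥ x) ^ 2 + (w ⬝ᵥ x) ^ 2 := by
    rw [add_mulVec, ← mulVec_mulVec, vecMulVec_mulVec, op_smul_eq_smul,
      evnorm_sq_eq_dotProduct, evnorm_sq_eq_dotProduct]
    simp only [add_dotProduct, dotProduct_add, dotProduct_smul, smul_dotProduct,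
      dotProduct_mulVec_self_of_transpose_mul_self hA, hperp, dotProduct_comm _ v, hvv]
    simp only [smul_eq_mul]
    ring
  have hX := pow_le_pow_left₀ (evnorm_nonneg _) (evnorm_mulVec_le X x) 2
  rw [← Real.sqrt_sq (evnorm_nonneg x), ← Real.sqrt_mul (by positivity),
    Real.le_sqrt (evnorm_nonneg _) (by positivity), hexpand]
  nlinarith [sq_dotProduct_le w x]

end SpectralNorm

lemma sub_mul_transpose_mul_eq_of_add_vecMulVec_eq_one {R ι κ₁ κ₂ κ : Type*} [CommRing R]
    [Fintype ι] [DecidableEq ι] [Fintype κ₁] [Fintype κ₂] {V₁ : Matrix ι κ₁ R}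
    {V₂ : Matrix ι κ₂ R} {v : ι → R}
    (h : V₁ * V₁ᵀ + V₂ * V₂ᵀ + vecMulVec v v = 1)
    (U : Matrix ι κ R) :
    U - V₁ * (V₁ᵀ * U) = V₂ * (V₂ᵀ * U) + vecMulVec v (v ᵥ* U) := by
  have hcompl : V₂ * V₂ᵀ + vecMulVec v v = 1 - V₁ * V₁ᵀ := by rw [← h]; abel
  rw [← Matrix.mul_assoc, ← Matrix.mul_assoc, ← vecMulVec_mul, ← Matrix.add_mul, hcompl,
    Matrix.sub_mul, Matrix.one_mul]

lemma transpose_mul_self_eq_one_of_orthonormal {d k : ℕ} {ι : Type*} [DecidableEq ι]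
    {u : ι → Fin d → ℝ}
    (horth : ∀ i i', vdot (u i) (u i') = if i = i' then 1 else 0) {f : Fin k → ι}
    (hf : Function.Injective f) :
    (of fun r c => u (f c) r)ᵀ * (of fun r c => u (f c) r) = 1 := by
  ext c c'
  exact (horth _ _).trans (by simp [one_apply, hf.eq_iff])

def projDeflation {n : ℕ} (v : Fin n → ℝ) (M : Matrix (Fin n) (Fin n) ℝ) :
    Matrix (Fin n) (Fin n) ℝ :=
  (1 - vecMulVec v v) * M * (1 - vecMulVec v v)

section ProjDeflation

variable {n : ℕ} {M : Matrix (Fin n) (Fin n) ℝ} {v u y : Fin n → ℝ} {lam l : ℝ}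

lemma projDeflation_isSymm (hM : M.IsSymm) : (projDeflation v M).IsSymm := by
  simp only [projDeflation, IsSymm, transpose_mul, transpose_sub, transpose_one,
    transpose_vecMulVec, hM.eq, Matrix.mul_assoc]

lemma sub_mul_dotProduct_eq_of_projDeflation (hM : M.IsSymm) (hu : M *ᵥ u = lam • u)
    (hy : projDeflation v M *ᵥ y = l • y) (hvy : v ⬝ᵥ y = 0) :
    (lam - l) * (y ⬝ᵥ u) = (y ⬝ᵥ M *ᵥ v) * (v ⬝ᵥ u) := by
  have hyP : y ᵥ* (1 - vecMulVec v v) = y := by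
    rw [vecMul_sub, vecMul_one, vecMul_vecMulVec, dotProduct_comm, hvy, zero_smul, sub_zero]
  have hPu : (1 - vecMulVec v v) *ᵥ u = u - (v ⬝ᵥ u) • v := by
    rw [sub_mulVec, one_mulVec, vecMulVec_mulVec, op_smul_eq_smul]
  have hleft : y ⬝ᵥ projDeflation v M *ᵥ u = l * (y ⬝ᵥ u) := by
    rw [dotProduct_mulVec, ← mulVec_transpose, (projDeflation_isSymm hM).eq, hy,
      smul_dotProduct, smul_eq_mul]
  have hright :
      y ⬝ᵥ projDeflation v M *ᵥ u = lam * (y ⬝ᵥ u) - (y ⬝ᵥ M *ᵥ v) * (v ⬝ᵥ u) := by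
    rw [projDeflation, ← mulVec_mulVec, ← mulVec_mulVec, hPu, dotProduct_mulVec, hyP,
      mulVec_sub, mulVec_smul, hu, dotProduct_sub, dotProduct_smul, dotProduct_smul,
      smul_eq_mul, smul_eq_mul]
    ring
  linear_combination hright.symm.trans hleft

lemma abs_dotProduct_le_of_projDeflation (hM : M.IsSymm) (hu : M *ᵥ u = lam • u)
    (hy : projDeflation v M *ᵥ y = l • y) (hvy : v ⬝ᵥ y = 0) {τ : ℝ} (hτ : 0 < τ)
    (hgap : τ ≤ |l - lam|) :
    |y ⬝ᵥ u| ≤ τ⁻¹ * (|y ⬝ᵥ M *ᵥ v| * |v ⬝ᵥ u|) := by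
  rw [le_inv_mul_iff₀ hτ, ← abs_mul, ← sub_mul_dotProduct_eq_of_projDeflation hM hu hy hvy,
    abs_mul, abs_sub_comm]
  exact mul_le_mul_of_nonneg_right hgap (abs_nonneg _)

lemma specNorm_transpose_mul_le_of_projDeflation (hM : M.IsSymm) (hv : evnorm v = 1)
    {μ τ : ℝ} (hτ : 0 < τ) {p k : ℕ} {V : Matrix (Fin n) (Fin p) ℝ} (hV : Vᵀ * V = 1)
    (hVv : v ᵥ* V = 0)
    (hVeig : ∀ c, ∃ l : ℝ, μ + τ < |l| ∧ projDeflation v M *ᵥ Vᵀ c = l • Vᵀ c)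
    {U : Matrix (Fin n) (Fin k) ℝ}
    (hUeig : ∀ c, ∃ lam : ℝ, |lam| ≤ μ ∧
      M *ᵥ (fun r => U r c) = lam • fun r => U r c) :
    specNorm (Vᵀ * U) ≤ specNorm M * evnorm (v ᵥ* U) / τ := by
  have hentry :
      specNorm (Vᵀ * U) ≤ τ⁻¹ * (evnorm (Vᵀ *ᵥ (M *ᵥ v)) * evnorm (v ᵥ* U)) :=
    specNorm_le_of_abs_apply_le_mul (inv_nonneg.2 hτ.le) fun i c => by
      obtain ⟨l, hl, hyi⟩ := hVeig i
      obtain ⟨lam, hlam, huc⟩ := hUeig c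
      exact abs_dotProduct_le_of_projDeflation hM huc hyi (congrFun hVv i) hτ
        (by linarith [abs_sub_abs_le_abs_sub l lam])
  have hMv : evnorm (Vᵀ *ᵥ (M *ᵥ v)) ≤ specNorm M :=
    (evnorm_transpose_mulVec_le hV _).trans (by simpa [hv] using evnorm_mulVec_le M v)
  rw [div_eq_inv_mul]
  exact hentry.trans <| mul_le_mul_of_nonneg_left
    (mul_le_mul_of_nonneg_right hMv (evnorm_nonneg _)) (inv_nonneg.2 hτ.le)

end ProjDeflation

/-- **eigenvector projection lemma.** If a unit vector `v` has correlation at most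
`ε ≤ 1/2` with all eigenvectors of `M` of absolute eigenvalue `≤ μ` (whose matrix is `U`), then
`U` approximately embeds into the span `V₁` of eigenvectors of
`M' = (I − vvᵀ)M(I − vvᵀ)` of absolute eigenvalue `≤ μ + τ`:
there is `Q` with `‖Q‖₂ ≤ 1` and `‖U − V₁Q‖₂ ≤ √(169 ε² ‖M‖₂²/τ² + ε²)`. -/
theorem eigenvector_projection {d j p q : ℕ} (hj : j ≤ d)
    (M : Matrix (Fin d) (Fin d) ℝ) (hM : M.IsSymm)
    (u : Fin d → Fin d → ℝ) (lam : Fin d → ℝ)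
    (horth : ∀ i i', vdot (u i) (u i') = if i = i' then (1 : ℝ) else 0)
    (heig : ∀ i, M.mulVec (u i) = lam i • u i)
    (μ : ℝ)
    -- `U = (u_{j+1}, …, u_d)` consists of all eigenvectors of absolute eigenvalue `≤ μ`
    (hsplit : ∀ i : Fin d, |lam i| ≤ μ ↔ j ≤ (i : ℕ))
    (U : Matrix (Fin d) (Fin (d - j)) ℝ)
    (hU : U = Matrix.of fun r c => u (Fin.cast (by omega) (Fin.natAdd j c)) r)
    (v : Fin d → ℝ) (hv : evnorm v = 1)
    (ε : ℝ) (hcorr : evnorm (Matrix.vecMul v U) ≤ ε)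
    (M' : Matrix (Fin d) (Fin d) ℝ)
    (hM' : M' = (1 - Matrix.vecMulVec v v) * M * (1 - Matrix.vecMulVec v v))
    (τ : ℝ) (hτ : 0 < τ)
    -- `[V₂, V₁, v]` is an orthogonal matrix of eigenvectors of `M'`
    (V₁ : Matrix (Fin d) (Fin q) ℝ) (V₂ : Matrix (Fin d) (Fin p) ℝ)
    (hV₁ : V₁ᵀ * V₁ = 1) (hV₂ : V₂ᵀ * V₂ = 1)
    (hV₂v : Matrix.vecMul v V₂ = 0)
    (hcomplete : V₁ * V₁ᵀ + V₂ * V₂ᵀ + Matrix.vecMulVec v v = 1)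
    (hV₂eig : ∀ c : Fin p, ∃ l : ℝ, μ + τ < |l| ∧ M'.mulVec (V₂ᵀ c) = l • V₂ᵀ c) :
    ∃ Q : Matrix (Fin q) (Fin (d - j)) ℝ, specNorm Q ≤ 1 ∧
      specNorm (U - V₁ * Q) ≤ Real.sqrt (169 * ε ^ 2 * specNorm M ^ 2 / τ ^ 2 + ε ^ 2) := by
  have hUU : Uᵀ * U = 1 := by
    subst hU
    exact transpose_mul_self_eq_one_of_orthonormal horth
      ((Fin.cast_injective _).comp (Fin.natAdd_injective _ _))
  have hUeig : ∀ c, ∃ l : ℝ, |l| ≤ μ ∧ M *ᵥ (fun r => U r c) = l • fun r => U r c :=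
    fun c => ⟨lam (Fin.cast (by omega) (Fin.natAdd j c)), (hsplit _).2 (by simp),
      by subst hU; exact heig _⟩
  have hX : specNorm (V₂ᵀ * U) ≤ specNorm M * ε / τ := by
    subst hM'
    exact (specNorm_transpose_mul_le_of_projDeflation hM hv hτ hV₂ hV₂v hV₂eig hUeig).trans
      (by gcongr; exact specNorm_nonneg M)
  refine ⟨V₁ᵀ * U, ?_, ?_⟩
  · refine (specNorm_mul_le _ _).trans ?_
    rw [specNorm_transpose]
    exact mul_le_one₀ (specNorm_le_one_of_transpose_mul_self hV₁) (specNorm_nonneg _)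
      (specNorm_le_one_of_transpose_mul_self hUU)
  · calc specNorm (U - V₁ * (V₁ᵀ * U))
        ≤ √(specNorm (V₂ᵀ * U) ^ 2 + evnorm (v ᵥ* U) ^ 2) := by
          rw [sub_mul_transpose_mul_eq_of_add_vecMulVec_eq_one hcomplete]
          exact specNorm_mul_add_vecMulVec_le hV₂ hV₂v hv _ _
      _ ≤ √((specNorm M * ε / τ) ^ 2 + ε ^ 2) := Real.sqrt_le_sqrt <| add_le_add
          (pow_le_pow_left₀ (specNorm_nonneg _) hX 2)
          (pow_le_pow_left₀ (evnorm_nonneg _) hcorr 2)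
      _ ≤ √(169 * ε ^ 2 * specNorm M ^ 2 / τ ^ 2 + ε ^ 2) := by
          rw [div_pow, mul_pow]
          gcongr √(?_ / _ + _)
          nlinarith [mul_nonneg (sq_nonneg (specNorm M)) (sq_nonneg ε)]
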